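/- arXiv:1705.07686 — 5 statements merged into one kernel-verified Lean document; each statement's English description precedes it below -/
import Mathlib

section
/- Let S be a schema and let σ be a prefix of a terminating path through S (σ ∈ pre(Π(S))). Then the set {m ∈ L(S) : σm ∈ pre(Π(S))} is one of the following: a singleton containing a label, a singleton containing an assignment letter ⟨y:=f(x)⟩, a pair {⟨p(x),true⟩, ⟨p(x),false⟩} for a predicate p of S, or the empty set; and if σ ∈ Π(S) then this set is empty. -/
/- The terminating paths through a schema form a prefix-free language in which the letter
after a common prefix is determined up to the outcome of a test, and in which both outcomes
of a test are always possible, since every schema has a terminating path to continue with.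
All three facts are proved by induction on the derivation of a path; for a sequence (and for
a loop body followed by the loop) prefix-freeness of the first factor is what forces two paths
sharing a long prefix to split the same way into the two factors. -/

namespace SchemaSlicing

/- Function symbols, predicate symbols, variables and labels are drawn from
   fixed infinite sets; we model each by ℕ. Arities are implicit: each
   occurrence of a symbol carries the list of its arguments. -/
abbrev Var := ℕ
abbrev Fn := ℕ
abbrev Pn := ℕ
abbrev Label := ℕ

/-- Structured program schemas. `loop` is the while-construct. -/
inductive Schema : Type where
  | skip : Schema
  | label : Label → Schema
  | assign : Var → Fn → List Var → Schema
  | seq : Schema → Schema → Schema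
  | ite : Pn → List Var → Schema → Schema → Schema
  | loop : Pn → List Var → Schema → Schema
  deriving DecidableEq

/-- Letters of the alphabet L(S): labels, assignment letters ⟨y:=f(x)⟩ and
    predicate letters ⟨p(x),Z⟩. -/
inductive Letter : Type where
  | lab : Label → Letter
  | asgn : Var → Fn → List Var → Letter
  | pred : Pn → List Var → Bool → Letter
  deriving DecidableEq

/-- Symbols: function symbols, predicate symbols and labels. -/
inductive Sym : Type where
  | fn : Fn → Sym
  | pn : Pn → Sym
  | lab : Label → Sym
  deriving DecidableEq

/-- The list of occurrences of function symbols, predicate symbols and labels in a schema. -/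
def Schema.syms : Schema → List Sym
  | .skip => []
  | .label l => [Sym.lab l]
  | .assign _ f _ => [Sym.fn f]
  | .seq S₁ S₂ => S₁.syms ++ S₂.syms
  | .ite p _ S₁ S₂ => Sym.pn p :: (S₁.syms ++ S₂.syms)
  | .loop q _ T => Sym.pn q :: T.syms

/-- A schema is linear if no function symbol, predicate symbol or label occurs
    more than once in it. -/
def Schema.Linear (S : Schema) : Prop := S.syms.Nodup

/-- Π(S), the set of terminating paths through S. -/
inductive Paths : Schema → List Letter → Prop where
  | skip : Paths Schema.skip []
  | label (l : Label) : Paths (Schema.label l) [Letter.lab l]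
  | assign (y : Var) (f : Fn) (xs : List Var) :
      Paths (Schema.assign y f xs) [Letter.asgn y f xs]
  | seq {S₁ S₂ w₁ w₂} : Paths S₁ w₁ → Paths S₂ w₂ → Paths (Schema.seq S₁ S₂) (w₁ ++ w₂)
  | iteTrue {p xs S₁ S₂ w} : Paths S₁ w →
      Paths (Schema.ite p xs S₁ S₂) (Letter.pred p xs true :: w)
  | iteFalse {p xs S₁ S₂ w} : Paths S₂ w →
      Paths (Schema.ite p xs S₁ S₂) (Letter.pred p xs false :: w)
  | loopFalse (q : Pn) (xs : List Var) (T : Schema) :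
      Paths (Schema.loop q xs T) [Letter.pred q xs false]
  | loopTrue {q xs T w ws} : Paths T w → Paths (Schema.loop q xs T) ws →
      Paths (Schema.loop q xs T) (Letter.pred q xs true :: (w ++ ws))

/-- ρ ∈ pre(Π(S)): ρ is a (finite) path through S.  (Every finite path through S,
    including every finite prefix of an infinite path, is a prefix of a terminating path.) -/
def PathPrefix (S : Schema) (ρ : List Letter) : Prop := ∃ τ, Paths S τ ∧ ρ <+: τ

/-- `IsQuotient S' S`: S' is obtained from S by deleting zero or more statements. -/
inductive IsQuotient : Schema → Schema → Prop where
  | skip (S : Schema) : IsQuotient Schema.skip S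
  | refl (S : Schema) : IsQuotient S S
  | seq {S₁' S₁ S₂' S₂} : IsQuotient S₁' S₁ → IsQuotient S₂' S₂ →
      IsQuotient (Schema.seq S₁' S₂') (Schema.seq S₁ S₂)
  | loop {q xs T' T} : IsQuotient T' T → IsQuotient (Schema.loop q xs T') (Schema.loop q xs T)
  | ite {p xs T₁ S₁ T₂ S₂} : IsQuotient T₁ S₁ → IsQuotient T₂ S₂ →
      IsQuotient (Schema.ite p xs T₁ T₂) (Schema.ite p xs S₁ S₂)

/-- The symbol (function symbol, predicate symbol or label) of a letter. -/
def Letter.sym : Letter → Sym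
  | .lab l => Sym.lab l
  | .asgn _ f _ => Sym.fn f
  | .pred p _ _ => Sym.pn p

/-- proj_{S'}(ρ): delete from ρ all letters whose function or predicate symbols,
    or labels, do not occur in S'. -/
def proj (S' : Schema) (ρ : List Letter) : List Letter :=
  ρ.filter (fun m => decide (m.sym ∈ S'.syms))

/-- An interpretation over a domain D. -/
structure Interp (D : Type) where
  fn : Fn → List D → D
  pn : Pn → List D → Bool

/-- One execution step on (non-⊥) states; predicate letters and labels do not change the state. -/
def execLetter {D : Type} (i : Interp D) (d : Var → D) : Letter → (Var → D)
  | .asgn y f xs => Function.update d y (i.fn f (xs.map d))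
  | _ => d

/-- M[schema(σ)]^i_d : the state after executing the assignments of the word σ from d. -/
def execWord {D : Type} (i : Interp D) (d : Var → D) (σ : List Letter) : Var → D :=
  σ.foldl (execLetter i) d

/-- ρ is consistent with (i,d): every predicate letter in ρ is evaluated by i in accordance
    with the sequence of assignments preceding it. -/
def Consistent {D : Type} (i : Interp D) (d : Var → D) (ρ : List Letter) : Prop :=
  ∀ σ p xs Z, (σ ++ [Letter.pred p xs Z]) <+: ρ → i.pn p (xs.map (execWord i d σ)) = Z

/-- `ρ` is a finite prefix of the path π(S,i,d). -/
def PrefixOfPi {D : Type} (i : Interp D) (d : Var → D) (S : Schema) (ρ : List Letter) : Prop :=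
  PathPrefix S ρ ∧ Consistent i d ρ

/-- The set of finite prefixes of π(S,i,d); this set determines the
    (possibly infinite) word π(S,i,d) uniquely. -/
def PiPrefixes {D : Type} (i : Interp D) (d : Var → D) (S : Schema) : Set (List Letter) :=
  {ρ | PrefixOfPi i d S ρ}

open Classical in
/-- The final state M[S]^i_d; `none` represents ⊥ (non-termination). -/
noncomputable def finalState {D : Type} (i : Interp D) (d : Var → D) (S : Schema) :
    Option (Var → D) :=
  if h : ∃ ρ, Paths S ρ ∧ Consistent i d ρ then some (execWord i d h.choose) else none

/-- The Herbrand domain Term(F,V). -/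
inductive Tm : Type where
  | var : Var → Tm
  | app : Fn → List Tm → Tm

/-- A Herbrand interpretation: function symbols act as term constructors. -/
def Interp.IsHerbrand (j : Interp Tm) : Prop := ∀ f ts, j.fn f ts = Tm.app f ts

/-- The natural state e. -/
def natState : Var → Tm := Tm.var

/-- A fixed Herbrand interpretation (the predicate part is irrelevant for executing
    assignments). -/
def hInterp : Interp Tm := ⟨fun f ts => Tm.app f ts, fun _ _ => true⟩

/-- M[σ]_e : the Herbrand state after executing the assignments of σ from the natural state. -/
def hExec (σ : List Letter) : Var → Tm := execWord hInterp natState σ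

/-- p(t) = Y is a consequence of μ. -/
def Consequence (μ : List Letter) (p : Pn) (ts : List Tm) (Y : Bool) : Prop :=
  ∃ μ' xs, (μ' ++ [Letter.pred p xs Y]) <+: μ ∧ xs.map (hExec μ') = ts

/-- ρ is executable: ρ is a prefix of π(S,i,d) for some domain, interpretation and state. -/
def Executable (S : Schema) (ρ : List Letter) : Prop :=
  ∃ (D : Type) (i : Interp D) (d : Var → D), PrefixOfPi i d S ρ

/-- ρ (through S) and ρ' (through S') are compatible: for some domain, interpretation i
    and state d they are prefixes of π(S,i,d) and π(S',i,d) respectively. -/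
def Compatible (S : Schema) (ρ : List Letter) (S' : Schema) (ρ' : List Letter) : Prop :=
  ∃ (D : Type) (i : Interp D) (d : Var → D), PrefixOfPi i d S ρ ∧ PrefixOfPi i d S' ρ'

/-- `Sub T S`: T occurs as a subschema of S. -/
inductive Sub : Schema → Schema → Prop where
  | refl (S : Schema) : Sub S S
  | seqL {T S₁ S₂} : Sub T S₁ → Sub T (Schema.seq S₁ S₂)
  | seqR {T S₁ S₂} : Sub T S₂ → Sub T (Schema.seq S₁ S₂)
  | iteT {T p xs S₁ S₂} : Sub T S₁ → Sub T (Schema.ite p xs S₁ S₂)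
  | iteF {T p xs S₁ S₂} : Sub T S₂ → Sub T (Schema.ite p xs S₁ S₂)
  | loop {T q xs B} : Sub T B → Sub T (Schema.loop q xs B)

/-- Simple l-reductions of paths through S. -/
inductive SimpleRed (S : Schema) (l : Label) : List Letter → List Letter → Prop where
  | loopRed {p xs B σ α γ} :
      Sub (Schema.loop p xs B) S → Paths B σ → Sym.lab l ∉ B.syms →
      SimpleRed S l (α ++ [Letter.pred p xs true] ++ σ ++ [Letter.pred p xs false] ++ γ)
                    (α ++ [Letter.pred p xs false] ++ γ)
  | iteRed {p xs S₁ S₂ σ α γ} {Z : Bool} :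
      Sub (Schema.ite p xs S₁ S₂) S → Paths (if Z then S₁ else S₂) σ →
      (if Z then S₂ else S₁) = Schema.skip →
      Sym.lab l ∉ S₁.syms → Sym.lab l ∉ S₂.syms →
      SimpleRed S l (α ++ [Letter.pred p xs Z] ++ σ ++ γ)
                    (α ++ [Letter.pred p xs (!Z)] ++ γ)

/-- ρ is l-reducible to ρ': zero or more simple l-reductions. -/
def Reducible (S : Schema) (l : Label) : List Letter → List Letter → Prop :=
  Relation.ReflTransGen (SimpleRed S l)

/-- maxpre(σ,σ') : the maximal common prefix of two words. -/
def maxpre : List Letter → List Letter → List Letter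
  | a :: as, b :: bs => if a = b then a :: maxpre as bs else []
  | _, _ => []

/-- The sequence of function and predicate symbols through which a path passes. -/
def symSeq (ρ : List Letter) : List Sym :=
  ρ.filterMap fun m => match m with
    | Letter.asgn _ f _ => some (Sym.fn f)
    | Letter.pred p _ _ => some (Sym.pn p)
    | Letter.lab _ => none

/-- S' (a quotient of S containing l) is a (ρl,V)-path-faithful dynamic slice of S:
    (1) every variable of V defines the same term after proj_{S'}(ρ) as after ρ, and
    (2) every maximal path through S' compatible with ρ has proj_{S'}(ρ) as a prefix
        (equivalently: whenever ρ is a prefix of π(S,i,d), proj_{S'}(ρ) is a prefix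
        of π(S',i,d)). -/
def IsPFDS (S : Schema) (ρ : List Letter) (l : Label) (V : Set Var) (S' : Schema) : Prop :=
  (∀ v ∈ V, hExec (proj S' ρ) v = hExec ρ v) ∧
  ∀ (D : Type) (i : Interp D) (d : Var → D),
    PrefixOfPi i d S ρ → PrefixOfPi i d S' (proj S' ρ)

/-- S' (a quotient of S containing l) is a (ρl,V)-dynamic slice of S: every maximal path
    through S' compatible with ρ has a prefix ρ' to which proj_{S'}(ρ) is l-reducible and
    such that every variable of V defines the same term after ρ' as after ρ. -/
def IsDS (S : Schema) (ρ : List Letter) (l : Label) (V : Set Var) (S' : Schema) : Prop :=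
  ∀ (D : Type) (i : Interp D) (d : Var → D), PrefixOfPi i d S ρ →
    ∃ ρ', PrefixOfPi i d S' ρ' ∧ Reducible S' l (proj S' ρ) ρ' ∧
      ∀ v ∈ V, hExec ρ' v = hExec ρ v

/-- T' is a (ρ,V)-path-faithful dynamic end slice of T
    (S = T l with a label l at the end, S' = T' l). -/
def IsPFDSEnd (T : Schema) (ρ : List Letter) (V : Set Var) (T' : Schema) : Prop :=
  IsPFDS (Schema.seq T (Schema.label 0)) ρ 0 V (Schema.seq T' (Schema.label 0))

/-- T' is a (ρ,V)-dynamic end slice of T. -/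
def IsDSEnd (T : Schema) (ρ : List Letter) (V : Set Var) (T' : Schema) : Prop :=
  IsDS (Schema.seq T (Schema.label 0)) ρ 0 V (Schema.seq T' (Schema.label 0))

/-- The set of function and predicate symbols of a schema. -/
def fpsyms (T : Schema) : Set Sym := {s | s ∈ T.syms ∧ ∀ l : Label, s ≠ Sym.lab l}

/-- T is a minimal (ρ,V)-path-faithful dynamic end slice of S: it is a path-faithful
    dynamic end slice, and no quotient of S with a strictly smaller set of function and
    predicate symbols is a (ρ,V)-dynamic end slice of S. -/
def MinimalPFDSEnd (S : Schema) (ρ : List Letter) (V : Set Var) (T : Schema) : Prop :=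
  IsPFDSEnd S ρ V T ∧
  ∀ T', IsQuotient T' S → fpsyms T' ⊂ fpsyms T → ¬ IsDSEnd S ρ V T'

open List

section Prefix

variable {α : Type*}

theorem concat_prefix_cons_iff {σ t : List α} {a m : α} :
    σ ++ [m] <+: a :: t ↔ (σ = [] ∧ m = a) ∨ ∃ σ', σ = a :: σ' ∧ σ' ++ [m] <+: t := by
  cases σ <;> simp [eq_comm]

theorem concat_prefix_append {σ a b : List α} {m : α} (h : σ ++ [m] <+: a ++ b) :
    σ ++ [m] <+: a ∨ ∃ σ₂, σ = a ++ σ₂ ∧ σ₂ ++ [m] <+: b := by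
  rcases le_or_gt a.length σ.length with hle | hlt
  · obtain ⟨σ₂, rfl⟩ : a <+: σ :=
      prefix_of_prefix_length_le (prefix_append a b) ((prefix_append σ [m]).trans h) hle
    rw [append_assoc, prefix_append_right_inj] at h
    exact Or.inr ⟨σ₂, rfl, h⟩
  · refine Or.inl (prefix_of_prefix_length_le h (prefix_append a b) ?_)
    rw [length_append, length_singleton]
    exact hlt

theorem append_eq_append_of_prefix_or_prefix {w₁ w₂ w₁' w₂' : List α}
    (h₁ : w₁ <+: w₁' ∨ w₁' <+: w₁ → w₁ = w₁') (h₂ : w₂ <+: w₂' ∨ w₂' <+: w₂ → w₂ = w₂')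
    (h : w₁ ++ w₂ <+: w₁' ++ w₂' ∨ w₁' ++ w₂' <+: w₁ ++ w₂) : w₁ ++ w₂ = w₁' ++ w₂' := by
  obtain rfl : w₁ = w₁' := h₁ <| by
    rcases h with h | h
    · exact prefix_or_prefix_of_prefix ((prefix_append _ _).trans h) (prefix_append _ _)
    · exact prefix_or_prefix_of_prefix (prefix_append _ _) ((prefix_append _ _).trans h)
  simp only [prefix_append_right_inj] at h
  rw [h₂ h]

theorem apply_eq_of_concat_prefix_append {β : Type*} {f : α → β} {w₁ w₂ w₁' w₂' σ : List α}
    {m m' : α} (hw₁ : w₁ <+: w₁' ∨ w₁' <+: w₁ → w₁ = w₁')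
    (h₁ : ∀ σ, σ ++ [m] <+: w₁ → σ ++ [m'] <+: w₁' → f m = f m')
    (h₂ : ∀ σ, σ ++ [m] <+: w₂ → σ ++ [m'] <+: w₂' → f m = f m')
    (h : σ ++ [m] <+: w₁ ++ w₂) (h' : σ ++ [m'] <+: w₁' ++ w₂') : f m = f m' := by
  have not_both {u v : List α} {x : α} (huv : u = v) (hu : σ ++ [x] <+: u) (hv : v <+: σ) :
      False := by
    subst huv
    simpa using (hu.trans hv).length_le
  rcases concat_prefix_append h with hA | ⟨σ₂, rfl, hB⟩ <;>
    rcases concat_prefix_append h' with hA' | ⟨σ₂', hσ, hB'⟩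
  · exact h₁ σ hA hA'
  · have hσ' : w₁' <+: σ := ⟨σ₂', hσ.symm⟩
    exact (not_both (hw₁ (.inr (hσ'.trans ((prefix_append _ _).trans hA)))) hA hσ').elim
  · exact (not_both (hw₁ (.inl ((prefix_append w₁ σ₂).trans
      ((prefix_append _ _).trans hA')))).symm hA' (prefix_append _ _)).elim
  · obtain rfl : w₁ = w₁' := hw₁ (prefix_or_prefix_of_prefix (prefix_append _ _) ⟨σ₂', hσ.symm⟩)
    obtain rfl := append_cancel_left hσ
    exact h₂ σ₂ hB hB'

theorem apply_eq_of_concat_prefix_cons {β : Type*} {f : α → β} {a a' : α} {t t' σ : List α}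
    {m m' : α}
    (h : σ ++ [m] <+: a :: t) (h' : σ ++ [m'] <+: a' :: t') (hhead : f a = f a')
    (htail : a = a' → ∀ σ, σ ++ [m] <+: t → σ ++ [m'] <+: t' → f m = f m') : f m = f m' := by
  rw [concat_prefix_cons_iff] at h h'
  rcases h with ⟨rfl, rfl⟩ | ⟨σ₁, rfl, h⟩ <;> rcases h' with ⟨h0, rfl⟩ | ⟨σ₂, h0, h'⟩
  · exact hhead
  · simp at h0
  · simp at h0
  · obtain ⟨rfl, rfl⟩ := cons_eq_cons.mp h0
    exact htail rfl σ₁ h h'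

theorem exists_concat_prefix_append {P₁ P₂ : List α → Prop} {w₁ w₂ σ : List α} {m m' : α}
    (hw₁ : P₁ w₁) (hw₂ : P₂ w₂)
    (h₁ : ∀ σ, σ ++ [m] <+: w₁ → ∃ τ, P₁ τ ∧ σ ++ [m'] <+: τ)
    (h₂ : ∀ σ, σ ++ [m] <+: w₂ → ∃ τ, P₂ τ ∧ σ ++ [m'] <+: τ)
    (h : σ ++ [m] <+: w₁ ++ w₂) : ∃ τ₁ τ₂, P₁ τ₁ ∧ P₂ τ₂ ∧ σ ++ [m'] <+: τ₁ ++ τ₂ := by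
  rcases concat_prefix_append h with hA | ⟨σ₂, rfl, hB⟩
  · obtain ⟨τ₁, hτ₁, hpre⟩ := h₁ σ hA
    exact ⟨τ₁, w₂, hτ₁, hw₂, hpre.trans (prefix_append _ _)⟩
  · obtain ⟨τ₂, hτ₂, hpre⟩ := h₂ σ₂ hB
    exact ⟨w₁, τ₂, hw₁, hτ₂, by simpa using hpre⟩

end Prefix

def Letter.eraseOutcome : Letter → Letter
  | .pred p xs _ => .pred p xs true
  | m => m

theorem Letter.eq_or_exists_pred_of_eraseOutcome_eq {m m₀ : Letter}
    (h : m.eraseOutcome = m₀.eraseOutcome) :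
    m = m₀ ∨ ∃ p xs Z Y, m₀ = .pred p xs Z ∧ m = .pred p xs Y := by
  cases m₀ <;> cases m <;> simp_all [Letter.eraseOutcome]

theorem exists_paths (S : Schema) : ∃ τ, Paths S τ := by
  induction S with
  | skip => exact ⟨[], .skip⟩
  | label l => exact ⟨_, .label l⟩
  | assign y f xs => exact ⟨_, .assign y f xs⟩
  | seq S₁ S₂ ih₁ ih₂ =>
    obtain ⟨w₁, hw₁⟩ := ih₁
    obtain ⟨w₂, hw₂⟩ := ih₂
    exact ⟨_, .seq hw₁ hw₂⟩
  | ite p xs S₁ S₂ ih₁ _ =>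
    obtain ⟨w₁, hw₁⟩ := ih₁
    exact ⟨_, .iteTrue hw₁⟩
  | loop q xs T _ => exact ⟨_, .loopFalse q xs T⟩

theorem pathPrefix_ite_pred {p : Pn} {xs : List Var} {S₁ S₂ : Schema} {Y : Bool} :
    PathPrefix (.ite p xs S₁ S₂) [.pred p xs Y] := by
  cases Y
  · obtain ⟨w, hw⟩ := exists_paths S₂
    exact ⟨_, .iteFalse hw, by simp⟩
  · obtain ⟨w, hw⟩ := exists_paths S₁
    exact ⟨_, .iteTrue hw, by simp⟩

theorem pathPrefix_loop_pred {q : Pn} {xs : List Var} {T : Schema} {Y : Bool} :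
    PathPrefix (.loop q xs T) [.pred q xs Y] := by
  cases Y
  · exact ⟨_, .loopFalse q xs T, by simp⟩
  · obtain ⟨w, hw⟩ := exists_paths T
    exact ⟨_, .loopTrue hw (.loopFalse q xs T), by simp⟩

namespace Paths

variable {S : Schema} {τ τ' σ : List Letter}

theorem eq_of_prefix_or_prefix (h : Paths S τ) (h' : Paths S τ') (hc : τ <+: τ' ∨ τ' <+: τ) :
    τ = τ' := by
  induction h generalizing τ' with
  | skip | label | assign => cases h'; rfl
  | seq _ _ ih₁ ih₂ =>
    cases h' with
    | seq h₁' h₂' => exact append_eq_append_of_prefix_or_prefix (ih₁ h₁') (ih₂ h₂') hc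
  | iteTrue _ ih =>
    cases h' with
    | iteTrue h₁' => simp only [cons_prefix_cons, true_and] at hc; rw [ih h₁' hc]
    | iteFalse => simp at hc
  | iteFalse _ ih =>
    cases h' with
    | iteTrue => simp at hc
    | iteFalse h₂' => simp only [cons_prefix_cons, true_and] at hc; rw [ih h₂' hc]
  | loopFalse =>
    cases h' with
    | loopFalse => rfl
    | loopTrue => simp at hc
  | loopTrue _ _ ih₁ ih₂ =>
    cases h' with
    | loopFalse => simp at hc
    | loopTrue h₁' h₂' =>
      simp only [cons_prefix_cons, true_and] at hc
      rw [append_eq_append_of_prefix_or_prefix (ih₁ h₁') (ih₂ h₂') hc]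

theorem eraseOutcome_eq (h : Paths S τ) (h' : Paths S τ') {m m' : Letter}
    (hm : σ ++ [m] <+: τ) (hm' : σ ++ [m'] <+: τ') : m.eraseOutcome = m'.eraseOutcome := by
  induction h generalizing τ' σ with
  | skip => simp at hm
  | label | assign =>
    cases h'
    exact apply_eq_of_concat_prefix_cons hm hm' rfl (fun _ _ hm => by simp at hm)
  | seq h₁ _ ih₁ ih₂ =>
    cases h' with
    | seq h₁' h₂' =>
      exact apply_eq_of_concat_prefix_append (h₁.eq_of_prefix_or_prefix h₁') (fun _ => ih₁ h₁')
        (fun _ => ih₂ h₂') hm hm'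
  | iteTrue _ ih =>
    cases h' with
    | iteTrue h₁' => exact apply_eq_of_concat_prefix_cons hm hm' rfl (fun _ _ => ih h₁')
    | iteFalse => exact apply_eq_of_concat_prefix_cons hm hm' rfl (fun h => by simp at h)
  | iteFalse _ ih =>
    cases h' with
    | iteTrue => exact apply_eq_of_concat_prefix_cons hm hm' rfl (fun h => by simp at h)
    | iteFalse h₂' => exact apply_eq_of_concat_prefix_cons hm hm' rfl (fun _ _ => ih h₂')
  | loopFalse =>
    cases h' <;> exact apply_eq_of_concat_prefix_cons hm hm' rfl (fun _ _ hm => by simp at hm)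
  | loopTrue h₁ _ ih₁ ih₂ =>
    cases h' with
    | loopFalse => exact apply_eq_of_concat_prefix_cons hm hm' rfl (fun h => by simp at h)
    | loopTrue h₁' h₂' =>
      exact apply_eq_of_concat_prefix_cons hm hm' rfl fun _ _ => apply_eq_of_concat_prefix_append
        (h₁.eq_of_prefix_or_prefix h₁') (fun _ => ih₁ h₁') (fun _ => ih₂ h₂')

theorem pathPrefix_concat_pred (h : Paths S τ) {p : Pn} {xs : List Var} {Z : Bool}
    (hm : σ ++ [.pred p xs Z] <+: τ) (Y : Bool) : PathPrefix S (σ ++ [.pred p xs Y]) := by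
  induction h generalizing σ with
  | skip => simp at hm
  | label | assign => simp [concat_prefix_cons_iff] at hm
  | loopFalse =>
    rcases concat_prefix_cons_iff.mp hm with ⟨rfl, hhead⟩ | ⟨_, rfl, htail⟩
    · cases hhead
      exact pathPrefix_loop_pred
    · simp at htail
  | seq h₁ h₂ ih₁ ih₂ =>
    obtain ⟨τ₁, τ₂, hτ₁, hτ₂, hpre⟩ :=
      exists_concat_prefix_append h₁ h₂ (fun _ => ih₁) (fun _ => ih₂) hm
    exact ⟨_, .seq hτ₁ hτ₂, hpre⟩
  | iteTrue _ ih =>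
    rcases concat_prefix_cons_iff.mp hm with ⟨rfl, hhead⟩ | ⟨σ', rfl, htail⟩
    · cases hhead
      exact pathPrefix_ite_pred
    · obtain ⟨τ₁, hτ₁, hpre⟩ := ih htail
      exact ⟨_, .iteTrue hτ₁, by simpa using hpre⟩
  | iteFalse _ ih =>
    rcases concat_prefix_cons_iff.mp hm with ⟨rfl, hhead⟩ | ⟨σ', rfl, htail⟩
    · cases hhead
      exact pathPrefix_ite_pred
    · obtain ⟨τ₂, hτ₂, hpre⟩ := ih htail
      exact ⟨_, .iteFalse hτ₂, by simpa using hpre⟩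
  | loopTrue h₁ h₂ ih₁ ih₂ =>
    rcases concat_prefix_cons_iff.mp hm with ⟨rfl, hhead⟩ | ⟨σ', rfl, htail⟩
    · cases hhead
      exact pathPrefix_loop_pred
    · obtain ⟨τ₁, τ₂, hτ₁, hτ₂, hpre⟩ :=
        exists_concat_prefix_append h₁ h₂ (fun _ => ih₁) (fun _ => ih₂) htail
      exact ⟨_, .loopTrue hτ₁ hτ₂, by simpa using hpre⟩

theorem not_pathPrefix_concat (h : Paths S σ) (m : Letter) : ¬ PathPrefix S (σ ++ [m]) := by
  rintro ⟨τ, hτ, hpre⟩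
  obtain rfl := h.eq_of_prefix_or_prefix hτ (.inl ((prefix_append _ _).trans hpre))
  simpa using hpre.length_le

end Paths

theorem setOf_pathPrefix_concat_eq {S : Schema} {σ : List Letter} {m₀ : Letter}
    (h₀ : PathPrefix S (σ ++ [m₀])) :
    {m | PathPrefix S (σ ++ [m])} = {m | m.eraseOutcome = m₀.eraseOutcome} := by
  obtain ⟨τ₀, hτ₀, hpre₀⟩ := h₀
  ext m
  refine ⟨fun ⟨τ, hτ, hpre⟩ => hτ.eraseOutcome_eq hτ₀ hpre hpre₀, fun hm => ?_⟩
  rcases Letter.eq_or_exists_pred_of_eraseOutcome_eq hm with rfl | ⟨p, xs, Z, Y, rfl, rfl⟩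
  · exact ⟨τ₀, hτ₀, hpre₀⟩
  · exact hτ₀.pathPrefix_concat_pred hpre₀ Y

theorem statement_0_general (S : Schema) (σ : List Letter) :
    ((∃ l : Label, {m : Letter | PathPrefix S (σ ++ [m])} = {Letter.lab l}) ∨
     (∃ (y : Var) (f : Fn) (xs : List Var),
        {m : Letter | PathPrefix S (σ ++ [m])} = {Letter.asgn y f xs}) ∨
     (∃ (p : Pn) (xs : List Var),
        {m : Letter | PathPrefix S (σ ++ [m])} =
          {Letter.pred p xs true, Letter.pred p xs false}) ∨
     ({m : Letter | PathPrefix S (σ ++ [m])} = ∅)) ∧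
    (Paths S σ → {m : Letter | PathPrefix S (σ ++ [m])} = ∅) := by
  refine ⟨?_, fun hσ => Set.eq_empty_iff_forall_notMem.mpr hσ.not_pathPrefix_concat⟩
  rcases Set.eq_empty_or_nonempty {m : Letter | PathPrefix S (σ ++ [m])} with hempty | ⟨m₀, hm₀⟩
  · exact .inr (.inr (.inr hempty))
  rw [setOf_pathPrefix_concat_eq hm₀]
  cases m₀ with
  | lab l => exact .inl ⟨l, by ext m; cases m <;> simp [Letter.eraseOutcome]⟩
  | asgn y f xs => exact .inr (.inl ⟨y, f, xs, by ext m; cases m <;> simp [Letter.eraseOutcome]⟩)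
  | pred p xs Z =>
    refine .inr (.inr (.inl ⟨p, xs, ?_⟩))
    ext (_ | _ | ⟨_, _, _ | _⟩) <;> simp [Letter.eraseOutcome]

/-- Lemma 2.3 / exe.lem: for σ ∈ pre(Π(S)), the set
    {m ∈ L(S) : σm ∈ pre(Π(S))} is a singleton label, a singleton assignment letter,
    a pair {⟨p(x),true⟩,⟨p(x),false⟩}, or empty; and it is empty whenever σ ∈ Π(S). -/
theorem statement_0 (S : Schema) (σ : List Letter) (h : PathPrefix S σ) :
    ((∃ l : Label, {m : Letter | PathPrefix S (σ ++ [m])} = {Letter.lab l}) ∨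
     (∃ (y : Var) (f : Fn) (xs : List Var),
        {m : Letter | PathPrefix S (σ ++ [m])} = {Letter.asgn y f xs}) ∨
     (∃ (p : Pn) (xs : List Var),
        {m : Letter | PathPrefix S (σ ++ [m])} =
          {Letter.pred p xs true, Letter.pred p xs false}) ∨
     ({m : Letter | PathPrefix S (σ ++ [m])} = ∅)) ∧
    (Paths S σ → {m : Letter | PathPrefix S (σ ++ [m])} = ∅) :=
  statement_0_general S σ

end SchemaSlicing
end

section
/- Let χ be a set of schemas, D a domain, d : V → D a state, and i an interpretation over D. Then there is a Herbrand interpretation j such that for every S ∈ χ, the path π(S, j, e) equals π(S, i, d). -/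
namespace SchemaSlicing

/-!
Let `j` be the Herbrand interpretation whose predicates first evaluate their argument terms
in `(i, d)` and then apply `i`. Evaluation in `(i, d)` commutes with execution: it sends the
Herbrand state reached from `e` along any word to the state reached from `d` under `i`. Hence
`j` and `i` decide every predicate letter alike, and `π(S, j, e)`, `π(S, i, d)` have the same
finite prefixes.
-/

section Evaluation

variable {D : Type} (i : Interp D) (d : Var → D)

def evalTm : Tm → D
  | .var v => d v
  | .app f ts => i.fn f (ts.attach.map fun t => evalTm t.1)
termination_by t => sizeOf t
decreasing_by have := List.sizeOf_lt_of_mem t.2; simp; omega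

@[simp]
lemma evalTm_var (v : Var) : evalTm i d (Tm.var v) = d v := by
  simp [evalTm]

@[simp]
lemma evalTm_app (f : Fn) (ts : List Tm) :
    evalTm i d (Tm.app f ts) = i.fn f (ts.map (evalTm i d)) := by
  simp [evalTm]

lemma evalTm_comp_natState : evalTm i d ∘ natState = d :=
  funext (evalTm_var i d)

lemma evalTm_comp_execLetter {j : Interp Tm} (hj : j.IsHerbrand) (t : Var → Tm) (m : Letter) :
    evalTm i d ∘ execLetter j t m = execLetter i (evalTm i d ∘ t) m := by
  cases m with
  | asgn y f xs =>
    simp only [execLetter, Function.comp_update, hj f, evalTm_app, List.map_map]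
  | lab | pred => rfl

lemma evalTm_comp_execWord {j : Interp Tm} (hj : j.IsHerbrand) (t : Var → Tm) (σ : List Letter) :
    evalTm i d ∘ execWord j t σ = execWord i (evalTm i d ∘ t) σ := by
  induction σ generalizing t with
  | nil => rfl
  | cons m σ ih =>
    simp only [execWord, List.foldl_cons] at ih ⊢
    rw [ih, evalTm_comp_execLetter i d hj]

def hbInterp : Interp Tm :=
  ⟨Tm.app, fun p ts => i.pn p (ts.map (evalTm i d))⟩

lemma hbInterp_isHerbrand : (hbInterp i d).IsHerbrand := fun _ _ => rfl

lemma consistent_hbInterp_natState_iff (ρ : List Letter) :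
    Consistent (hbInterp i d) natState ρ ↔ Consistent i d ρ := by
  have hstate (σ : List Letter) :
      evalTm i d ∘ execWord (hbInterp i d) natState σ = execWord i d σ := by
    rw [evalTm_comp_execWord i d (hbInterp_isHerbrand i d), evalTm_comp_natState]
  have hpn (p : Pn) (ts : List Tm) : (hbInterp i d).pn p ts = i.pn p (ts.map (evalTm i d)) := rfl
  simp only [Consistent, hpn, List.map_map, hstate]

end Evaluation

/-- for any set χ of schemas, any domain D, state d : V → D and
    interpretation i over D, there is a Herbrand interpretation j such that
    π(S,j,e) = π(S,i,d) for every S ∈ χ (equality of the possibly infinite paths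
    expressed as equality of their sets of finite prefixes). -/
theorem statement_4 (χ : Set Schema) (D : Type) (d : Var → D) (i : Interp D) :
    ∃ j : Interp Tm, j.IsHerbrand ∧
      ∀ S ∈ χ, ∀ ρ : List Letter, (PrefixOfPi j natState S ρ ↔ PrefixOfPi i d S ρ) :=
  ⟨hbInterp i d, hbInterp_isHerbrand i d,
    fun _ _ ρ => and_congr_right' (consistent_hbInterp_natState_iff i d ρ)⟩

end SchemaSlicing
end

section
/- Let χ be a set of schemas, D a domain, d : V → D a state, and i an interpretation over D. Then there is a Herbrand interpretation j such that (1) for every S ∈ χ, π(S, j, e) = π(S, i, d), and (2) for all S₁, S₂ ∈ χ, all variables v₁, v₂, and all prefixes ρ₁ of π(S₁, j, e) and ρ₂ of π(S₂, j, e): if M[schema(ρ₁)]^j_e(v₁) = M[schema(ρ₂)]^j_e(v₂) then M[schema(ρ₁)]^i_d(v₁) = M[schema(ρ₂)]^i_d(v₂). -/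
namespace SchemaSlicing

/-! Take for `j` the Herbrand interpretation that decides `p(t₁, …, tₙ)` by evaluating the
terms `tₖ` under `(i, d)`. Evaluation maps every `j`-run from `e` onto the corresponding
`i`-run from `d`, so `j` takes the same branches as `i`, and equal terms evaluate to equal
values. -/

def Tm.eval {D : Type} (i : Interp D) (d : Var → D) : Tm → D
  | .var v => d v
  | .app f ts => i.fn f (ts.attach.map fun ⟨t, _⟩ => t.eval i d)

section Eval

variable {D : Type} (i : Interp D) (d : Var → D)

@[simp] theorem Tm.eval_var (v : Var) : (Tm.var v).eval i d = d v := by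
  simp [Tm.eval]

@[simp] theorem Tm.eval_app (f : Fn) (ts : List Tm) :
    (Tm.app f ts).eval i d = i.fn f (ts.map (Tm.eval i d)) := by
  simp [Tm.eval, List.map_subtype]

theorem Tm.eval_comp_natState : Tm.eval i d ∘ natState = d := by
  funext v
  simp [natState]

def Interp.herbrandLift : Interp Tm := ⟨Tm.app, fun p ts => i.pn p (ts.map (Tm.eval i d))⟩

theorem Interp.isHerbrand_herbrandLift : (i.herbrandLift d).IsHerbrand := fun _ _ => rfl

variable {i d}

theorem Tm.eval_comp_execLetter {j : Interp Tm} (hj : j.IsHerbrand) (s : Var → Tm)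
    (m : Letter) : Tm.eval i d ∘ execLetter j s m = execLetter i (Tm.eval i d ∘ s) m := by
  cases m with
  | asgn y f xs =>
    funext w
    by_cases h : w = y <;> simp [execLetter, Function.update, h, hj f, Function.comp_def]
  | lab | pred => rfl

theorem Tm.eval_comp_execWord {j : Interp Tm} (hj : j.IsHerbrand) (s : Var → Tm)
    (σ : List Letter) : Tm.eval i d ∘ execWord j s σ = execWord i (Tm.eval i d ∘ s) σ := by
  induction σ generalizing s with
  | nil => rfl
  | cons m σ ih =>
    simp only [execWord, List.foldl_cons] at ih ⊢
    rw [ih, Tm.eval_comp_execLetter hj]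

theorem Tm.eval_execWord_natState {j : Interp Tm} (hj : j.IsHerbrand) (σ : List Letter)
    (v : Var) : (execWord j natState σ v).eval i d = execWord i d σ v := by
  simpa only [Tm.eval_comp_natState, Function.comp_apply] using
    congrFun (Tm.eval_comp_execWord hj natState σ) v

theorem consistent_herbrandLift_iff (ρ : List Letter) :
    Consistent (i.herbrandLift d) natState ρ ↔ Consistent i d ρ := by
  have hpn : ∀ σ p (xs : List Var), (i.herbrandLift d).pn p (xs.map (execWord _ natState σ)) =
      i.pn p (xs.map (execWord i d σ)) := fun σ p xs => by
    simp only [Interp.herbrandLift, List.map_map]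
    congr 1
    exact List.map_congr_left fun v _ =>
      Tm.eval_execWord_natState (Interp.isHerbrand_herbrandLift i d) σ v
  simp only [Consistent, hpn]

end Eval

/-- Theorem 2.9 / freeint.thm: for any set χ of schemas, domain D,
    state d and interpretation i there is a Herbrand interpretation j with
    (1) π(S,j,e) = π(S,i,d) for all S ∈ χ, and (2) for S₁,S₂ ∈ χ, variables v₁,v₂ and
    prefixes ρ₁, ρ₂ of π(S₁,j,e), π(S₂,j,e): if M[schema(ρ₁)]^j_e(v₁) = M[schema(ρ₂)]^j_e(v₂)
    then M[schema(ρ₁)]^i_d(v₁) = M[schema(ρ₂)]^i_d(v₂). -/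
theorem statement_5 (χ : Set Schema) (D : Type) (d : Var → D) (i : Interp D) :
    ∃ j : Interp Tm, j.IsHerbrand ∧
      (∀ S ∈ χ, ∀ ρ : List Letter, (PrefixOfPi j natState S ρ ↔ PrefixOfPi i d S ρ)) ∧
      (∀ S₁ ∈ χ, ∀ S₂ ∈ χ, ∀ (v₁ v₂ : Var) (ρ₁ ρ₂ : List Letter),
        PrefixOfPi j natState S₁ ρ₁ → PrefixOfPi j natState S₂ ρ₂ →
        execWord j natState ρ₁ v₁ = execWord j natState ρ₂ v₂ →
        execWord i d ρ₁ v₁ = execWord i d ρ₂ v₂) := by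
  have hj := Interp.isHerbrand_herbrandLift i d
  refine ⟨i.herbrandLift d, hj, fun S _ ρ => ?_, fun S₁ _ S₂ _ v₁ v₂ ρ₁ ρ₂ _ _ heq => ?_⟩
  · simp only [PrefixOfPi, consistent_herbrandLift_iff]
  · simpa only [Tm.eval_execWord_natState hj] using congrArg (Tm.eval i d) heq

end SchemaSlicing
end

section
/- Let S be a linear schema, let q be a while predicate in S, and let μ be a terminating path in the body of q (i.e. μ ∈ Π(T) where 'while q(y) do T' is the subschema of S at q). Then for any words α, γ: the word α⟨q,true⟩μ⟨q,false⟩γ is a path through S if and only if α⟨q,false⟩γ is a path through S; moreover α⟨q,true⟩μ⟨q,false⟩γ is a terminating path through S if and only if α⟨q,false⟩γ is a terminating path through S. -/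
theorem List.append_eq_append_append {β : Type*} {w₁ w₂ α u γ : List β}
    (h : w₁ ++ w₂ = α ++ u ++ γ) :
    (∃ γ₁, w₁ = α ++ u ++ γ₁ ∧ γ = γ₁ ++ w₂) ∨
    (∃ α₂, w₂ = α₂ ++ u ++ γ ∧ α = w₁ ++ α₂) ∨
    (∃ u₁ u₂, u = u₁ ++ u₂ ∧ u₁ ≠ [] ∧ u₂ ≠ [] ∧ w₁ = α ++ u₁ ∧ w₂ = u₂ ++ γ) := by
  rw [List.append_assoc] at h
  rcases List.append_eq_append_iff.1 h with ⟨α₂, rfl, hw₂⟩ | ⟨c, rfl, hc⟩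
  · exact Or.inr (Or.inl ⟨α₂, by simp [hw₂], rfl⟩)
  rcases List.append_eq_append_iff.1 hc with ⟨γ₁, rfl, rfl⟩ | ⟨u₂, rfl, rfl⟩
  · exact Or.inl ⟨γ₁, by simp, rfl⟩
  rcases eq_or_ne c [] with rfl | hc
  · exact Or.inr (Or.inl ⟨[], by simp, by simp⟩)
  rcases eq_or_ne u₂ [] with rfl | hu₂
  · exact Or.inl ⟨[], by simp, by simp⟩
  exact Or.inr (Or.inr ⟨c, u₂, rfl, hc, hu₂, rfl, rfl⟩)

theorem List.cons_eq_append_append {β : Type*} {x : β} {w α u γ : List β}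
    (h : x :: w = α ++ u ++ γ) (hx : x ∉ u) (hu : u ≠ []) :
    ∃ α', α = x :: α' ∧ w = α' ++ u ++ γ := by
  rcases α with _ | ⟨y, α'⟩
  · obtain ⟨z, u', rfl⟩ := List.exists_cons_of_ne_nil hu
    simp only [List.nil_append, List.cons_append, List.cons.injEq] at h
    exact absurd (h.1 ▸ List.mem_cons_self) hx
  · simp only [List.cons_append, List.cons.injEq] at h
    exact ⟨α', by rw [h.1], h.2⟩

theorem List.append_cons_inj_of_forall_not {β : Type*} {P : β → Prop} {w μ s t : List β}
    {a b : β} (h : w ++ a :: s = μ ++ b :: t) (hw : ∀ x ∈ w, ¬ P x) (hμ : ∀ x ∈ μ, ¬ P x)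
    (ha : P a) (hb : P b) : w = μ ∧ a = b ∧ s = t := by
  induction w generalizing μ with
  | nil =>
    cases μ with
    | nil => simpa using h
    | cons c μ =>
      simp only [List.nil_append, List.cons_append, List.cons.injEq] at h
      exact absurd (h.1 ▸ ha) (hμ c List.mem_cons_self)
  | cons x w ih =>
    cases μ with
    | nil =>
      simp only [List.nil_append, List.cons_append, List.cons.injEq] at h
      exact absurd (h.1 ▸ hb) (hw x List.mem_cons_self)
    | cons c μ =>
      simp only [List.cons_append, List.cons.injEq] at h
      obtain ⟨rfl, h⟩ := h
      have := ih h (fun y hy => hw y (List.mem_cons_of_mem x hy))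
        (fun y hy => hμ y (List.mem_cons_of_mem x hy))
      simpa using this

namespace SchemaSlicing

theorem Paths.sym_mem {S : Schema} {w : List Letter} (h : Paths S w) :
    ∀ m ∈ w, m.sym ∈ S.syms := by
  induction h with
  | seq _ _ ih₁ ih₂ =>
    simp only [List.mem_append, Schema.syms]
    rintro m (hm | hm)
    exacts [Or.inl (ih₁ m hm), Or.inr (ih₂ m hm)]
  | iteTrue _ ih => simp_all [Schema.syms, Letter.sym]
  | iteFalse _ ih => simp_all [Schema.syms, Letter.sym]
  | loopTrue _ _ ih₁ ih₂ =>
    simp only [List.mem_cons, List.mem_append]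
    rintro m (rfl | hm | hm)
    · simp [Schema.syms, Letter.sym]
    · exact List.mem_cons_of_mem _ (ih₁ m hm)
    · exact ih₂ m hm
  | _ => simp [Schema.syms, Letter.sym]

theorem Paths.loop_eq_cons {p : Pn} {xs : List Var} {B : Schema} {w : List Letter}
    (h : Paths (.loop p xs B) w) : ∃ b w', w = Letter.pred p xs b :: w' := by
  cases h
  exacts [⟨false, [], rfl⟩, ⟨true, _, rfl⟩]

theorem Paths.loop_induction {p : Pn} {xs : List Var} {B : Schema}
    {motive : (w : List Letter) → Paths (.loop p xs B) w → Prop}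
    (exit : motive _ (.loopFalse p xs B))
    (iterate : ∀ {w ws} (hw : Paths B w) (hws : Paths (.loop p xs B) ws), motive ws hws →
      motive _ (.loopTrue hw hws))
    {w : List Letter} (h : Paths (.loop p xs B) w) : motive w h := by
  suffices ∀ {L w} (h : Paths L w) (hL : L = .loop p xs B), ∀ h', motive w h' from this h rfl h
  intro L w h
  induction h with
  | loopFalse => rintro ⟨⟩ _; exact exit
  | loopTrue hw hws _ ih => rintro ⟨⟩ _; exact iterate hw hws (ih rfl hws)
  | _ => rintro ⟨⟩

theorem Sub.syms_sublist {A B : Schema} (h : Sub A B) : A.syms.Sublist B.syms := by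
  induction h with
  | refl => exact List.Sublist.refl _
  | seqL _ ih => exact ih.trans (List.sublist_append_left _ _)
  | seqR _ ih => exact ih.trans (List.sublist_append_right _ _)
  | iteT _ ih => exact (ih.trans (List.sublist_append_left _ _)).cons _
  | iteF _ ih => exact (ih.trans (List.sublist_append_right _ _)).cons _
  | loop _ ih => exact ih.cons _

theorem Sub.linear {A B : Schema} (h : Sub A B) (hB : B.Linear) : A.Linear :=
  hB.sublist h.syms_sublist

def PathRewrite (S : Schema) (u v : List Letter) : Prop :=
  ∀ α γ, Paths S (α ++ u ++ γ) → Paths S (α ++ v ++ γ)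

namespace PathRewrite

variable {u v : List Letter}

theorem pathPrefix {S : Schema} (h : PathRewrite S u v) {α γ : List Letter}
    (hp : PathPrefix S (α ++ u ++ γ)) : PathPrefix S (α ++ v ++ γ) := by
  obtain ⟨_, hτ, δ, rfl⟩ := hp
  exact ⟨_, by simpa using h α (γ ++ δ) (by simpa using hτ), δ, by simp⟩

theorem seq_left {S₁ S₂ : Schema} (h : PathRewrite S₁ u v) (hS : (Schema.seq S₁ S₂).Linear)
    (hu : ∀ m ∈ u, m.sym ∈ S₁.syms) (hne : u ≠ []) : PathRewrite (.seq S₁ S₂) u v := by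
  intro α γ hp
  generalize hw : α ++ u ++ γ = w at hp
  cases hp with | seq hp₁ hp₂ =>
  have hdisj := (List.nodup_append.1 hS).2.2
  rcases List.append_eq_append_append hw.symm with
    ⟨γ₁, rfl, rfl⟩ | ⟨α₂, rfl, rfl⟩ | ⟨u₁, u₂, rfl, -, hu₂, rfl, rfl⟩
  · simpa using (h α γ₁ hp₁).seq hp₂
  · obtain ⟨m, hm⟩ := List.exists_mem_of_ne_nil u hne
    exact absurd rfl (hdisj _ (hu m hm) _ (hp₂.sym_mem m (by simp [hm])))
  · obtain ⟨m, hm⟩ := List.exists_mem_of_ne_nil u₂ hu₂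
    exact absurd rfl (hdisj _ (hu m (by simp [hm])) _ (hp₂.sym_mem m (by simp [hm])))

theorem seq_right {S₁ S₂ : Schema} (h : PathRewrite S₂ u v) (hS : (Schema.seq S₁ S₂).Linear)
    (hu : ∀ m ∈ u, m.sym ∈ S₂.syms) (hne : u ≠ []) : PathRewrite (.seq S₁ S₂) u v := by
  intro α γ hp
  generalize hw : α ++ u ++ γ = w at hp
  cases hp with | seq hp₁ hp₂ =>
  have hdisj := (List.nodup_append.1 hS).2.2
  rcases List.append_eq_append_append hw.symm with
    ⟨γ₁, rfl, rfl⟩ | ⟨α₂, rfl, rfl⟩ | ⟨u₁, u₂, rfl, hu₁, -, rfl, rfl⟩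
  · obtain ⟨m, hm⟩ := List.exists_mem_of_ne_nil u hne
    exact absurd rfl (hdisj _ (hp₁.sym_mem m (by simp [hm])) _ (hu m hm))
  · simpa using hp₁.seq (h α₂ γ hp₂)
  · obtain ⟨m, hm⟩ := List.exists_mem_of_ne_nil u₁ hu₁
    exact absurd rfl (hdisj _ (hp₁.sym_mem m (by simp [hm])) _ (hu m (by simp [hm])))

theorem ite_left {p : Pn} {xs : List Var} {S₁ S₂ : Schema} (h : PathRewrite S₁ u v)
    (hS : (Schema.ite p xs S₁ S₂).Linear) (hu : ∀ m ∈ u, m.sym ∈ S₁.syms) (hne : u ≠ []) :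
    PathRewrite (.ite p xs S₁ S₂) u v := by
  obtain ⟨hp, hS₁₂⟩ := List.nodup_cons.1 hS
  have hpu : ∀ Z, Letter.pred p xs Z ∉ u := fun Z hZ =>
    hp (List.mem_append_left _ (hu _ hZ))
  intro α γ hpath
  generalize hw : α ++ u ++ γ = w at hpath
  cases hpath with
  | iteTrue hpath =>
    obtain ⟨α', rfl, rfl⟩ := List.cons_eq_append_append hw.symm (hpu true) hne
    simpa using (h α' γ hpath).iteTrue
  | iteFalse hpath =>
    obtain ⟨α', rfl, rfl⟩ := List.cons_eq_append_append hw.symm (hpu false) hne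
    obtain ⟨m, hm⟩ := List.exists_mem_of_ne_nil u hne
    exact absurd rfl
      ((List.nodup_append.1 hS₁₂).2.2 _ (hu m hm) _ (hpath.sym_mem m (by simp [hm])))

theorem ite_right {p : Pn} {xs : List Var} {S₁ S₂ : Schema} (h : PathRewrite S₂ u v)
    (hS : (Schema.ite p xs S₁ S₂).Linear) (hu : ∀ m ∈ u, m.sym ∈ S₂.syms) (hne : u ≠ []) :
    PathRewrite (.ite p xs S₁ S₂) u v := by
  obtain ⟨hp, hS₁₂⟩ := List.nodup_cons.1 hS
  have hpu : ∀ Z, Letter.pred p xs Z ∉ u := fun Z hZ =>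
    hp (List.mem_append_right _ (hu _ hZ))
  intro α γ hpath
  generalize hw : α ++ u ++ γ = w at hpath
  cases hpath with
  | iteTrue hpath =>
    obtain ⟨α', rfl, rfl⟩ := List.cons_eq_append_append hw.symm (hpu true) hne
    obtain ⟨m, hm⟩ := List.exists_mem_of_ne_nil u hne
    exact absurd rfl
      ((List.nodup_append.1 hS₁₂).2.2 _ (hpath.sym_mem m (by simp [hm])) _ (hu m hm))
  | iteFalse hpath =>
    obtain ⟨α', rfl, rfl⟩ := List.cons_eq_append_append hw.symm (hpu false) hne
    simpa using (h α' γ hpath).iteFalse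

theorem loop {p : Pn} {xs : List Var} {B : Schema} (h : PathRewrite B u v)
    (hS : (Schema.loop p xs B).Linear) (hu : ∀ m ∈ u, m.sym ∈ B.syms) (hne : u ≠ []) :
    PathRewrite (.loop p xs B) u v := by
  have hpu : ∀ Z, Letter.pred p xs Z ∉ u := fun Z hZ =>
    (List.nodup_cons.1 hS).1 (hu _ hZ)
  intro α γ hpath
  generalize hw : α ++ u ++ γ = w at hpath
  induction hpath using Paths.loop_induction generalizing α γ with
  | exit =>
    obtain ⟨m, hm⟩ := List.exists_mem_of_ne_nil u hne
    have : m ∈ [Letter.pred p xs false] := hw ▸ by simp [hm]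
    exact (hpu false (List.mem_singleton.1 this ▸ hm)).elim
  | iterate hpw hpws ih =>
    obtain ⟨α', rfl, hsplit⟩ := List.cons_eq_append_append hw.symm (hpu true) hne
    rcases List.append_eq_append_append hsplit with
      ⟨γ₁, rfl, rfl⟩ | ⟨α₂, rfl, rfl⟩ | ⟨u₁, u₂, rfl, -, hu₂, -, rfl⟩
    · simpa using (h α' γ₁ hpw).loopTrue hpws
    · simpa using hpw.loopTrue (ih α₂ γ rfl)
    · obtain ⟨b, ws, hws⟩ := hpws.loop_eq_cons
      obtain ⟨a, u₂, rfl⟩ := List.exists_cons_of_ne_nil hu₂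
      obtain rfl : a = Letter.pred p xs b := List.head_eq_of_cons_eq (by simpa using hws)
      exact (hpu b (by simp)).elim

theorem of_sub {L S : Schema} (hL : Sub L S) (hS : S.Linear) (h : PathRewrite L u v)
    (hu : ∀ m ∈ u, m.sym ∈ L.syms) (hne : u ≠ []) : PathRewrite S u v := by
  induction hL with
  | refl => exact h
  | seqL hL ih =>
    exact (ih (hS.sublist (List.sublist_append_left _ _))).seq_left hS
      (fun m hm => hL.syms_sublist.subset (hu m hm)) hne
  | seqR hL ih =>
    exact (ih (hS.sublist (List.sublist_append_right _ _))).seq_right hS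
      (fun m hm => hL.syms_sublist.subset (hu m hm)) hne
  | iteT hL ih =>
    exact (ih (hS.sublist ((List.sublist_append_left _ _).cons _))).ite_left hS
      (fun m hm => hL.syms_sublist.subset (hu m hm)) hne
  | iteF hL ih =>
    exact (ih (hS.sublist ((List.sublist_append_right _ _).cons _))).ite_right hS
      (fun m hm => hL.syms_sublist.subset (hu m hm)) hne
  | loop hL ih =>
    exact (ih (hS.sublist (List.sublist_cons_self _ _))).loop hS
      (fun m hm => hL.syms_sublist.subset (hu m hm)) hne

end PathRewrite

section Loop

variable {q : Pn} {ys : List Var} {T : Schema} {μ : List Letter}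

theorem pathRewrite_loop_insert (hμ : Paths T μ) (hq : Sym.pn q ∉ T.syms) :
    PathRewrite (.loop q ys T) [Letter.pred q ys false]
      ([Letter.pred q ys true] ++ μ ++ [Letter.pred q ys false]) := by
  intro α γ hpath
  generalize hw : α ++ [Letter.pred q ys false] ++ γ = w at hpath
  induction hpath using Paths.loop_induction generalizing α γ with
  | exit =>
    obtain ⟨rfl, rfl⟩ : α = [] ∧ γ = [] := by rcases α with _ | ⟨a, α⟩ <;> simp_all
    simpa using hμ.loopTrue (.loopFalse q ys T)
  | iterate hpw hpws ih =>
    obtain ⟨α', rfl, hsplit⟩ := List.cons_eq_append_append hw.symm (by simp) (by simp)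
    rcases List.append_eq_append_append hsplit with
      ⟨γ₁, rfl, rfl⟩ | ⟨α₂, rfl, rfl⟩ | ⟨u₁, u₂, hu, hu₁, hu₂, -, -⟩
    · exact (hq (hpw.sym_mem (Letter.pred q ys false) (by simp))).elim
    · simpa using hpw.loopTrue (ih α₂ γ rfl)
    · rcases u₁ with _ | ⟨a, _ | ⟨b, u₁⟩⟩ <;> simp_all

theorem pathRewrite_loop_delete (hμ : Paths T μ) (hq : Sym.pn q ∉ T.syms) :
    PathRewrite (.loop q ys T) ([Letter.pred q ys true] ++ μ ++ [Letter.pred q ys false])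
      [Letter.pred q ys false] := by
  intro α γ hpath
  generalize hw : α ++ ([Letter.pred q ys true] ++ μ ++ [Letter.pred q ys false]) ++ γ = w
    at hpath
  induction hpath using Paths.loop_induction generalizing α γ with
  | exit =>
    have : Letter.pred q ys true ∈ [Letter.pred q ys false] := hw ▸ by simp
    simp at this
  | iterate hpw hpws ih =>
    rcases α with _ | ⟨a, α⟩
    · -- q occurs neither in w nor in μ, so both end right before the next q-letter.
      simp only [List.nil_append, List.append_assoc, List.cons_append,
        List.cons.injEq, true_and] at hw
      obtain ⟨b, ws, rfl⟩ := hpws.loop_eq_cons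
      obtain ⟨-, hb, rfl⟩ := List.append_cons_inj_of_forall_not
        (P := fun m => m.sym = Sym.pn q) hw (fun m hm hmq => hq (hmq ▸ hμ.sym_mem m hm))
        (fun m hm hmq => hq (hmq ▸ hpw.sym_mem m hm)) rfl rfl
      cases hb
      simpa using hpws
    · obtain ⟨rfl, hsplit⟩ := List.cons_eq_cons.1 hw
      rcases List.append_eq_append_append hsplit.symm with
        ⟨γ₁, rfl, rfl⟩ | ⟨α₂, rfl, rfl⟩ | ⟨u₁, u₂, hu, hu₁, -, rfl, -⟩
      · exact (hq (hpw.sym_mem (Letter.pred q ys true) (by simp))).elim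
      · simpa using hpw.loopTrue (ih α₂ γ rfl)
      · obtain ⟨c, u₁, rfl⟩ := List.exists_cons_of_ne_nil hu₁
        obtain rfl : Letter.pred q ys true = c := List.head_eq_of_cons_eq (by simpa using hu)
        exact (hq (hpw.sym_mem (Letter.pred q ys true) (by simp))).elim

end Loop

/-- Proposition 4.1(1) / substitute.prop: for a while predicate q of a
    linear schema S with body T and a terminating path μ through T, a word
    α⟨q,true⟩μ⟨q,false⟩γ is a path through S iff α⟨q,false⟩γ is, and one is a
    terminating path through S iff the other is. -/
theorem statement_7 (S : Schema) (hlin : S.Linear) (q : Pn) (ys : List Var) (T : Schema)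
    (hsub : Sub (Schema.loop q ys T) S) (μ : List Letter) (hμ : Paths T μ)
    (α γ : List Letter) :
    (PathPrefix S (α ++ [Letter.pred q ys true] ++ μ ++ [Letter.pred q ys false] ++ γ) ↔
      PathPrefix S (α ++ [Letter.pred q ys false] ++ γ)) ∧
    (Paths S (α ++ [Letter.pred q ys true] ++ μ ++ [Letter.pred q ys false] ++ γ) ↔
      Paths S (α ++ [Letter.pred q ys false] ++ γ)) := by
  have hq : Sym.pn q ∉ T.syms := (List.nodup_cons.1 (hsub.linear hlin)).1
  have hloop : ∀ m ∈ [Letter.pred q ys true] ++ μ ++ [Letter.pred q ys false],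
      m.sym ∈ (Schema.loop q ys T).syms := by
    simp only [List.mem_append, List.mem_singleton]
    rintro m ((rfl | hm) | rfl)
    · simp [Schema.syms, Letter.sym]
    · exact List.mem_cons_of_mem _ (hμ.sym_mem m hm)
    · simp [Schema.syms, Letter.sym]
  have hdel := (pathRewrite_loop_delete (ys := ys) hμ hq).of_sub hsub hlin hloop (by simp)
  have hins := (pathRewrite_loop_insert (ys := ys) hμ hq).of_sub hsub hlin
    (fun m hm => hloop m (by simp_all)) (by simp)
  rw [show α ++ [Letter.pred q ys true] ++ μ ++ [Letter.pred q ys false] ++ γ =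
      α ++ ([Letter.pred q ys true] ++ μ ++ [Letter.pred q ys false]) ++ γ by
    simp only [List.append_assoc]]
  exact ⟨⟨hdel.pathPrefix, hins.pathPrefix⟩, ⟨hdel α γ, hins α γ⟩⟩

end SchemaSlicing
end

section
/- Let S be a linear schema, let q be an if predicate in S with Z-part S_Z and ¬Z-part S_{¬Z} for Z ∈ {true,false}, and let μ ∈ Π(S_Z), μ' ∈ Π(S_{¬Z}) be terminating paths in the Z-part and ¬Z-part of q respectively. Then for any words α, γ: the word α⟨q,Z⟩μγ is a path through S if and only if α⟨q,¬Z⟩μ'γ is a path through S; moreover one of these is a terminating path through S if and only if the other is. -/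
namespace SchemaSlicing

/-! By linearity the letters `⟨q,·⟩` can only come from the one if-statement `q` of `S`. Induction
on the position of that statement in `S` shows that every terminating path through `⟨q,Z⟩` has the
form `α⟨q,Z⟩νδ` with `ν ∈ Π(S_Z)`, where the context `α _ δ` accepts every terminating path of the
if-statement. Since `Π(S_Z)` is prefix-free, `ν = μ` and `δ = γ`, so `⟨q,¬Z⟩μ'` may be put in its
place. Paths that are prefixes reduce to terminating ones by extending `γ`. -/

theorem pathPrefix_iff {S : Schema} {ρ : List Letter} :
    PathPrefix S ρ ↔ ∃ δ, Paths S (ρ ++ δ) :=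
  ⟨fun ⟨_, h, δ, hδ⟩ => ⟨δ, hδ ▸ h⟩, fun ⟨δ, h⟩ => ⟨_, h, δ, rfl⟩⟩

theorem append_eq_append_cons {β : Type*} {w₁ w₂ α t : List β} {x : β}
    (h : w₁ ++ w₂ = α ++ x :: t) :
    (∃ t₁, w₁ = α ++ x :: t₁ ∧ t = t₁ ++ w₂) ∨ (∃ α₂, α = w₁ ++ α₂ ∧ w₂ = α₂ ++ x :: t) := by
  rcases List.append_eq_append_iff.1 h with ⟨α₂, hα, hw₂⟩ | ⟨bs, hw₁, hxt⟩
  · exact Or.inr ⟨α₂, hα, hw₂⟩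
  · rcases List.cons_eq_append_iff.1 hxt with ⟨rfl, hw₂⟩ | ⟨t₁, rfl, ht⟩
    · exact Or.inr ⟨[], by simpa using hw₁.symm, hw₂⟩
    · exact Or.inl ⟨t₁, hw₁, ht⟩

theorem Sub.syms_sublist_s8 {T S : Schema} (h : Sub T S) : List.Sublist T.syms S.syms := by
  induction h with
  | refl => exact .refl _
  | seqL _ ih => exact ih.trans (List.sublist_append_left _ _)
  | seqR _ ih => exact ih.trans (List.sublist_append_right _ _)
  | iteT _ ih => exact (ih.trans (List.sublist_append_left _ _)).cons _
  | iteF _ ih => exact (ih.trans (List.sublist_append_right _ _)).cons _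
  | loop _ ih => exact ih.cons _

theorem Schema.Linear.of_sub {T S : Schema} (hlin : S.Linear) (h : Sub T S) : T.Linear :=
  hlin.sublist h.syms_sublist_s8

theorem Sub.pn_mem {q : Pn} {ys : List Var} {S₁ S₂ S : Schema}
    (h : Sub (Schema.ite q ys S₁ S₂) S) : Sym.pn q ∈ S.syms :=
  h.syms_sublist_s8.subset (by simp [Schema.syms])

theorem Paths.sym_mem_s8 {T : Schema} {w : List Letter} (h : Paths T w) {x : Letter}
    (hx : x ∈ w) : x.sym ∈ T.syms := by
  induction h <;> aesop (add norm simp [Letter.sym, Schema.syms])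

theorem Paths.pn_mem {T : Schema} {w : List Letter} (h : Paths T w) {q : Pn} {ys : List Var}
    {Z : Bool} (hx : Letter.pred q ys Z ∈ w) : Sym.pn q ∈ T.syms :=
  h.sym_mem_s8 hx

theorem Paths.ite {p : Pn} {xs : List Var} {A B : Schema} {w : List Letter} (b : Bool)
    (h : Paths (if b then A else B) w) : Paths (Schema.ite p xs A B) (Letter.pred p xs b :: w) := by
  cases b
  · exact .iteFalse h
  · exact .iteTrue h

theorem Paths.ite_inv {p : Pn} {xs : List Var} {A B : Schema} {w : List Letter}
    (h : Paths (Schema.ite p xs A B) w) :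
    ∃ b w', w = Letter.pred p xs b :: w' ∧ Paths (if b then A else B) w' := by
  cases h with
  | iteTrue h => exact ⟨true, _, rfl, h⟩
  | iteFalse h => exact ⟨false, _, rfl, h⟩

theorem Paths.eq_of_append_eq_append {T : Schema} {v w x y : List Letter} (hv : Paths T v)
    (hw : Paths T w) (h : v ++ x = w ++ y) : v = w := by
  induction hv generalizing w x y with
  | skip | label | assign | loopFalse => cases hw <;> simp_all
  | seq _ _ ih₁ ih₂ =>
    cases hw with
    | seq hw₁ hw₂ =>
      simp only [List.append_assoc] at h
      obtain rfl := ih₁ hw₁ h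
      rw [ih₂ hw₂ (List.append_cancel_left h)]
  | iteTrue _ ih =>
    cases hw with
    | iteTrue hw' =>
      simp only [List.cons_append, List.cons.injEq, true_and] at h
      rw [ih hw' h]
    | iteFalse => simp at h
  | iteFalse _ ih =>
    cases hw with
    | iteFalse hw' =>
      simp only [List.cons_append, List.cons.injEq, true_and] at h
      rw [ih hw' h]
    | iteTrue => simp at h
  | loopTrue _ _ ih₁ ih₂ =>
    cases hw with
    | loopFalse => simp at h
    | loopTrue hw₁ hw₂ =>
      simp only [List.cons_append, List.cons.injEq, true_and, List.append_assoc] at h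
      obtain rfl := ih₁ hw₁ h
      rw [ih₂ hw₂ (List.append_cancel_left h)]

theorem Schema.Linear.pn_not_mem_branch {p : Pn} {xs : List Var} {A B : Schema}
    (hlin : (Schema.ite p xs A B).Linear) (b : Bool) : Sym.pn p ∉ (if b then A else B).syms := by
  simp only [Schema.Linear, Schema.syms, List.nodup_cons, List.mem_append, not_or] at hlin
  cases b <;> simp [hlin.1.1, hlin.1.2]

theorem Schema.Linear.branch_eq_of_mem {p : Pn} {xs : List Var} {A B : Schema}
    (hlin : (Schema.ite p xs A B).Linear) {s : Sym} {b b' : Bool}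
    (hb : s ∈ (if b then A else B).syms) (hb' : s ∈ (if b' then A else B).syms) : b = b' := by
  obtain ⟨-, -, -, hdisj⟩ := List.nodup_cons.1 hlin |>.imp_right List.nodup_append.1
  cases b <;> cases b' <;> simp only [Bool.false_eq_true, ite_false, ite_true] at hb hb'
  all_goals first
    | rfl
    | exact (hdisj _ hb _ hb' rfl).elim
    | exact (hdisj _ hb' _ hb rfl).elim

/-- The invariant proved by induction on the position of `if q(ys) then S₁ else S₂` inside `S`. -/
def PathsFactorThroughIte (S : Schema) (q : Pn) (ys : List Var) (S₁ S₂ : Schema) : Prop :=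
  ∀ α Z t, Paths S (α ++ Letter.pred q ys Z :: t) →
    ∃ ν δ, t = ν ++ δ ∧ Paths (if Z then S₁ else S₂) ν ∧
      ∀ τ, Paths (Schema.ite q ys S₁ S₂) τ → Paths S (α ++ τ ++ δ)

section FactorThroughIte

variable {q : Pn} {ys : List Var} {S₁ S₂ : Schema}

theorem pathsFactorThroughIte_self (hlin : (Schema.ite q ys S₁ S₂).Linear) :
    PathsFactorThroughIte (Schema.ite q ys S₁ S₂) q ys S₁ S₂ := by
  intro α Z t hw
  obtain ⟨b, w', heq, hw'⟩ := hw.ite_inv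
  cases α with
  | nil =>
    obtain ⟨-, -, rfl⟩ := Letter.pred.inj (List.cons.inj heq).1
    obtain rfl := (List.cons.inj heq).2
    exact ⟨t, [], by simp, hw', fun τ hτ => by simpa using hτ⟩
  | cons a α' =>
    obtain ⟨-, rfl⟩ := List.cons.inj heq
    exact absurd (hw'.pn_mem List.mem_append_cons_self) (hlin.pn_not_mem_branch b)

variable {p : Pn} {xs : List Var} {A B : Schema}

theorem PathsFactorThroughIte.seq_left (h : PathsFactorThroughIte A q ys S₁ S₂)
    (hlin : (Schema.seq A B).Linear) (hq : Sym.pn q ∈ A.syms) :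
    PathsFactorThroughIte (Schema.seq A B) q ys S₁ S₂ := by
  intro α Z t hw
  generalize hw_eq : α ++ Letter.pred q ys Z :: t = w at hw
  cases hw with
  | @seq _ _ w₁ w₂ hA hB =>
    rcases append_eq_append_cons hw_eq.symm with ⟨t₁, rfl, rfl⟩ | ⟨α₂, -, rfl⟩
    · obtain ⟨ν, δ, rfl, hν, hsubst⟩ := h α Z t₁ hA
      exact ⟨ν, δ ++ w₂, by simp, hν, fun τ hτ => by simpa using (hsubst τ hτ).seq hB⟩
    · exact (List.nodup_append.1 hlin).2.2 _ hq _ (hB.pn_mem List.mem_append_cons_self) rfl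
        |>.elim

theorem PathsFactorThroughIte.seq_right (h : PathsFactorThroughIte B q ys S₁ S₂)
    (hlin : (Schema.seq A B).Linear) (hq : Sym.pn q ∈ B.syms) :
    PathsFactorThroughIte (Schema.seq A B) q ys S₁ S₂ := by
  intro α Z t hw
  generalize hw_eq : α ++ Letter.pred q ys Z :: t = w at hw
  cases hw with
  | @seq _ _ w₁ w₂ hA hB =>
    rcases append_eq_append_cons hw_eq.symm with ⟨t₁, rfl, -⟩ | ⟨α₂, rfl, rfl⟩
    · exact (List.nodup_append.1 hlin).2.2 _ (hA.pn_mem List.mem_append_cons_self) _ hq rfl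
        |>.elim
    · obtain ⟨ν, δ, rfl, hν, hsubst⟩ := h α₂ Z t hB
      exact ⟨ν, δ, rfl, hν, fun τ hτ => by simpa using hA.seq (hsubst τ hτ)⟩

theorem PathsFactorThroughIte.ite (b : Bool)
    (h : PathsFactorThroughIte (if b then A else B) q ys S₁ S₂)
    (hlin : (Schema.ite p xs A B).Linear) (hq : Sym.pn q ∈ (if b then A else B).syms) :
    PathsFactorThroughIte (Schema.ite p xs A B) q ys S₁ S₂ := by
  intro α Z t hw
  obtain ⟨b', w', heq, hw'⟩ := hw.ite_inv
  cases α with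
  | nil =>
    obtain ⟨rfl, -, -⟩ := Letter.pred.inj (List.cons.inj heq).1
    exact absurd hq (hlin.pn_not_mem_branch b)
  | cons a α' =>
    obtain ⟨rfl, rfl⟩ := List.cons.inj heq
    obtain rfl := hlin.branch_eq_of_mem hq (hw'.pn_mem List.mem_append_cons_self)
    obtain ⟨ν, δ, rfl, hν, hsubst⟩ := h α' Z t hw'
    exact ⟨ν, δ, rfl, hν, fun τ hτ => by simpa using (hsubst τ hτ).ite (p := p) (xs := xs) b⟩

theorem PathsFactorThroughIte.loop (h : PathsFactorThroughIte B q ys S₁ S₂)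
    (hlin : (Schema.loop p xs B).Linear) (hq : Sym.pn q ∈ B.syms) :
    PathsFactorThroughIte (Schema.loop p xs B) q ys S₁ S₂ := by
  have hpq : p ≠ q := by rintro rfl; exact (List.nodup_cons.1 hlin).1 hq
  intro α Z t hw
  generalize hL : Schema.loop p xs B = L at hw
  generalize hw_eq : α ++ Letter.pred q ys Z :: t = w at hw
  induction hw generalizing α t with
  | loopFalse =>
    obtain ⟨rfl, rfl, rfl⟩ := Schema.loop.inj hL
    have hmem : Letter.pred q ys Z ∈ [Letter.pred p xs false] := by
      rw [← hw_eq]; exact List.mem_append_cons_self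
    exact (hpq (Letter.pred.inj (List.mem_singleton.1 hmem)).1.symm).elim
  | @loopTrue _ _ _ w ws hB hws _ ih =>
    obtain ⟨rfl, rfl, rfl⟩ := Schema.loop.inj hL
    cases α with
    | nil => exact (hpq (Letter.pred.inj (List.cons.inj hw_eq).1).1.symm).elim
    | cons a α' =>
      simp only [List.cons_append, List.cons.injEq] at hw_eq
      obtain ⟨rfl, hw_eq⟩ := hw_eq
      rcases append_eq_append_cons hw_eq.symm with ⟨t₁, rfl, rfl⟩ | ⟨α₂, rfl, rfl⟩
      · obtain ⟨ν, δ, rfl, hν, hsubst⟩ := h α' Z t₁ hB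
        exact ⟨ν, δ ++ ws, by simp, hν,
          fun τ hτ => by simpa using (hsubst τ hτ).loopTrue hws⟩
      · obtain ⟨ν, δ, rfl, hν, hsubst⟩ := ih α₂ t rfl rfl
        exact ⟨ν, δ, rfl, hν, fun τ hτ => by simpa using hB.loopTrue (hsubst τ hτ)⟩
  | _ => cases hL

end FactorThroughIte

theorem Sub.pathsFactorThroughIte {q : Pn} {ys : List Var} {S₁ S₂ S : Schema}
    (hsub : Sub (Schema.ite q ys S₁ S₂) S) (hlin : S.Linear) :
    PathsFactorThroughIte S q ys S₁ S₂ := by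
  induction hsub with
  | refl => exact pathsFactorThroughIte_self hlin
  | seqL hs ih => exact (ih (hlin.of_sub (.seqL (.refl _)))).seq_left hlin hs.pn_mem
  | seqR hs ih => exact (ih (hlin.of_sub (.seqR (.refl _)))).seq_right hlin hs.pn_mem
  | iteT hs ih => exact .ite true (ih (hlin.of_sub (.iteT (.refl _)))) hlin hs.pn_mem
  | iteF hs ih => exact .ite false (ih (hlin.of_sub (.iteF (.refl _)))) hlin hs.pn_mem
  | loop hs ih => exact (ih (hlin.of_sub (.loop (.refl _)))).loop hlin hs.pn_mem

theorem Sub.paths_substitute {S S₁ S₂ : Schema} {q : Pn} {ys : List Var} {Z : Bool}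
    {μ μ' α γ : List Letter} (hsub : Sub (Schema.ite q ys S₁ S₂) S) (hlin : S.Linear)
    (hμ : Paths (if Z then S₁ else S₂) μ) (hμ' : Paths (if Z then S₂ else S₁) μ')
    (h : Paths S (α ++ Letter.pred q ys Z :: (μ ++ γ))) :
    Paths S (α ++ Letter.pred q ys (!Z) :: (μ' ++ γ)) := by
  obtain ⟨ν, δ, hsplit, hν, hsubst⟩ := hsub.pathsFactorThroughIte hlin α Z _ h
  obtain rfl := hμ.eq_of_append_eq_append hν hsplit
  obtain rfl := List.append_cancel_left hsplit
  simpa using hsubst _ (Paths.ite (!Z) (by cases Z <;> simpa using hμ'))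

theorem Sub.paths_substitute_iff {S S₁ S₂ : Schema} {q : Pn} {ys : List Var} {Z : Bool}
    {μ μ' : List Letter} (hsub : Sub (Schema.ite q ys S₁ S₂) S) (hlin : S.Linear)
    (hμ : Paths (if Z then S₁ else S₂) μ) (hμ' : Paths (if Z then S₂ else S₁) μ')
    (α γ : List Letter) :
    Paths S (α ++ Letter.pred q ys Z :: (μ ++ γ)) ↔
      Paths S (α ++ Letter.pred q ys (!Z) :: (μ' ++ γ)) := by
  refine ⟨hsub.paths_substitute hlin hμ hμ', fun h => ?_⟩
  simpa using hsub.paths_substitute hlin (Z := !Z) (by cases Z <;> simpa using hμ')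
    (by cases Z <;> simpa using hμ) h

/-- Proposition 4.1(2) / substitute.prop: for an if predicate q of a linear
    schema S with Z-part and ¬Z-part, and terminating paths μ, μ' through the Z-part and
    ¬Z-part respectively, α⟨q,Z⟩μγ is a path through S iff α⟨q,¬Z⟩μ'γ is, and one is a
    terminating path through S iff the other is. -/
theorem statement_8 (S : Schema) (hlin : S.Linear) (q : Pn) (ys : List Var)
    (S₁ S₂ : Schema) (hsub : Sub (Schema.ite q ys S₁ S₂) S) (Z : Bool)
    (μ μ' : List Letter)
    (hμ : Paths (if Z then S₁ else S₂) μ) (hμ' : Paths (if Z then S₂ else S₁) μ')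
    (α γ : List Letter) :
    (PathPrefix S (α ++ [Letter.pred q ys Z] ++ μ ++ γ) ↔
      PathPrefix S (α ++ [Letter.pred q ys (!Z)] ++ μ' ++ γ)) ∧
    (Paths S (α ++ [Letter.pred q ys Z] ++ μ ++ γ) ↔
      Paths S (α ++ [Letter.pred q ys (!Z)] ++ μ' ++ γ)) := by
  have key := hsub.paths_substitute_iff hlin hμ hμ' α
  simp only [pathPrefix_iff, List.append_assoc, List.singleton_append]
  exact ⟨exists_congr fun δ => key (γ ++ δ), key γ⟩

end SchemaSlicing
end
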